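/- For every g ∈ SL(2,ℝ), every convex function f : (0,∞) → ℝ with f(1) = 0, and all real 2×2 symmetric positive-definite matrices θ, θ′, the f-divergence between Poincaré distributions is invariant under the SL(2,ℝ) action: D_f[p_θ : p_{θ′}] = D_f[p_{g⁻ᵀθg⁻¹} : p_{g⁻ᵀθ′g⁻¹}]. -/

import Mathlib

/-!
Write `μ = dx dy / y²` for the `GL(2,ℝ)`-invariant hyperbolic measure `volume` on `ℍ`.
Relative to `μ` the Poincaré distribution has density
`ρ_θ(z) = c(det θ) · exp(-Q_θ(z) / Im z)` with `Q_θ(z) = θ₀₀ |z|² + 2 θ₀₁ Re z + θ₁₁`,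
and the `f`-divergence is `∫ ρ_θ f(ρ_θ' / ρ_θ) dμ`. For `g ∈ SL(2,ℝ)` the determinant of `θ` is
unchanged by `θ ↦ g⁻ᵀ θ g⁻¹`, while `Q_{g⁻ᵀθg⁻¹}(g•z) = Q_θ(z) / |cz + d|²` and
`Im (g•z) = Im z / |cz + d|²`; hence `ρ_{g⁻ᵀθg⁻¹}(g•z) = ρ_θ(z)`, and the invariance of `μ`
under `z ↦ g•z` gives the equality of the two divergences.
-/

open MeasureTheory Matrix

/-- The Poincaré density on the upper half-plane, as a density on `ℝ × ℝ`
(vanishing for `y ≤ 0`), indexed by a 2×2 symmetric positive-definite matrix. -/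
noncomputable def poincareDensity (θ : Matrix (Fin 2) (Fin 2) ℝ) (z : ℝ × ℝ) : ℝ :=
  if 0 < z.2 then
    Real.sqrt θ.det * Real.exp (2 * Real.sqrt θ.det) / Real.pi *
      Real.exp (-(θ 0 0 * (z.1 ^ 2 + z.2 ^ 2) + 2 * θ 0 1 * z.1 + θ 1 1) / z.2) / z.2 ^ 2
  else 0

/-- The `f`-divergence between two densities on the upper half-plane. -/
noncomputable def fDivH (f : ℝ → ℝ) (p q : ℝ × ℝ → ℝ) : ℝ :=
  ∫ z in {w : ℝ × ℝ | 0 < w.2}, p z * f (q z / p z)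

open UpperHalfPlane ComplexConjugate

local notation "M₂" => Matrix (Fin 2) (Fin 2) ℝ
lemma setIntegral_snd_pos_eq_integral_upperHalfPlane (G : ℝ × ℝ → ℝ) :
    ∫ w in {w : ℝ × ℝ | 0 < w.2}, G w = ∫ τ : ℍ, τ.im ^ 2 * G (τ.re, τ.im) := by
  have hdensity (τ : ℍ) :
      ((1 / NNReal.mk τ.im τ.im_pos.le) ^ 2 : NNReal) • (τ.im ^ 2 * G (τ.re, τ.im)) =
        G (τ.re, τ.im) := by
    rw [NNReal.smul_def]
    simp only [one_div, NNReal.inv_mk, NNReal.coe_pow, NNReal.coe_mk, inv_pow, smul_eq_mul]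
    field_simp
  have hcoe := measurableEmbedding_coe.integral_map (μ := volume.comap UpperHalfPlane.coe)
    (fun z : ℂ ↦ G (z.re, z.im))
  rw [measurableEmbedding_coe.map_comap, range_coe] at hcoe
  rw [volume_def, integral_withDensity_eq_integral_smul (by fun_prop)]
  simp_rw [hdensity]
  rw [← Complex.volume_preserving_equiv_real_prod.setIntegral_preimage_emb
    Complex.measurableEquivRealProd.measurableEmbedding G {w | 0 < w.2}]
  exact hcoe

/-- The density, with respect to the hyperbolic measure on `ℍ`, of the measure `p dx dy`. -/
noncomputable def hyperbolicDensity (p : ℝ × ℝ → ℝ) (τ : ℍ) : ℝ :=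
  τ.im ^ 2 * p (τ.re, τ.im)

lemma fDivH_eq_integral_hyperbolicDensity (f : ℝ → ℝ) (p q : ℝ × ℝ → ℝ) :
    fDivH f p q =
      ∫ τ : ℍ, hyperbolicDensity p τ * f (hyperbolicDensity q τ / hyperbolicDensity p τ) := by
  rw [fDivH, setIntegral_snd_pos_eq_integral_upperHalfPlane]
  congr 1 with τ
  rw [hyperbolicDensity, hyperbolicDensity, mul_div_mul_left _ _ (pow_ne_zero 2 τ.im_ne_zero),
    mul_assoc]

def poincareForm (θ : M₂) (z : ℂ) : ℝ :=
  θ 0 0 * (z.re ^ 2 + z.im ^ 2) + 2 * θ 0 1 * z.re + θ 1 1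

lemma hyperbolicDensity_poincareDensity (θ : M₂) (τ : ℍ) :
    hyperbolicDensity (poincareDensity θ) τ =
      √θ.det * Real.exp (2 * √θ.det) / Real.pi * Real.exp (-poincareForm θ τ / τ.im) := by
  rw [hyperbolicDensity, poincareDensity, if_pos τ.im_pos, poincareForm, coe_re, coe_im]
  field_simp [τ.im_ne_zero]

lemma poincareForm_div_mul_normSq (θ : M₂) (n : ℂ) {d : ℂ} (hd : d ≠ 0) :
    poincareForm θ (n / d) * Complex.normSq d =
      θ 0 0 * Complex.normSq n + 2 * θ 0 1 * (n * conj d).re + θ 1 1 * Complex.normSq d := by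
  have hN : d.re ^ 2 + d.im ^ 2 ≠ 0 := by
    simpa [Complex.normSq_apply, sq] using (Complex.normSq_pos.mpr hd).ne'
  simp only [poincareForm, Complex.div_re, Complex.div_im, Complex.mul_re, Complex.conj_re,
    Complex.conj_im, Complex.normSq_apply]
  field_simp
  ring

/- `poincareForm θ (n / d) * |d|²` is the Hermitian form `v* θ v` at `v = (n, d)`. For
`n / d = g • z` we have `v = g (z, 1)`, which `g⁻¹` carries back to `(z, 1)`. -/
lemma poincareForm_num_div_denom_mul_normSq {g : GL (Fin 2) ℝ} (hg : (g : M₂).det = 1)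
    {θ : M₂} (hθ : θ.IsSymm) {z : ℂ} (hz : z.im ≠ 0) :
    poincareForm (((g : M₂)⁻¹)ᵀ * θ * (g : M₂)⁻¹) (num g z / denom g z) *
      Complex.normSq (denom g z) = poincareForm θ z := by
  have h1 : g 0 0 * g 1 1 - g 0 1 * g 1 0 = 1 := by rwa [det_fin_two] at hg
  rw [poincareForm_div_mul_normSq _ _ (denom_ne_zero_of_im g hz), inv_def, hg, adjugate_fin_two,
    Ring.inverse_one, one_smul]
  simp only [Fin.isValue, mul_apply, transpose_apply, of_apply, cons_val', cons_val_zero,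
    cons_val_fin_one, Fin.sum_univ_two, cons_val_one, neg_mul, hθ.apply 0 1, mul_neg, num, denom,
    Complex.normSq_apply, Complex.add_re, Complex.mul_re, Complex.ofReal_re, Complex.ofReal_im,
    zero_mul, sub_zero, Complex.add_im, Complex.mul_im, add_zero, map_add, map_mul,
    Complex.conj_ofReal, Complex.conj_re, Complex.conj_im, neg_zero, sub_neg_eq_add, poincareForm]
  linear_combination (θ 0 0 * (z.re ^ 2 + z.im ^ 2) + 2 * θ 0 1 * z.re + θ 1 1) *
    (g 0 0 * g 1 1 - g 0 1 * g 1 0 + 1) * h1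

lemma hyperbolicDensity_poincareDensity_smul {g : GL (Fin 2) ℝ} (hg : (g : M₂).det = 1)
    {θ : M₂} (hθ : θ.IsSymm) (τ : ℍ) :
    hyperbolicDensity (poincareDensity (((g : M₂)⁻¹)ᵀ * θ * (g : M₂)⁻¹)) (g • τ) =
      hyperbolicDensity (poincareDensity θ) τ := by
  have hdet : (((g : M₂)⁻¹)ᵀ * θ * (g : M₂)⁻¹).det = θ.det := by
    simp only [det_mul, det_transpose, det_nonsing_inv, hg, Ring.inverse_one, one_mul, mul_one]
  have hg' : g.det.val = 1 := by rw [GeneralLinearGroup.val_det_apply, hg]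
  have hexponent : poincareForm (((g : M₂)⁻¹)ᵀ * θ * (g : M₂)⁻¹) (g • τ : ℍ) / (g • τ).im =
      poincareForm θ τ / τ.im := by
    rw [coe_smul_of_det_pos (hg' ▸ one_pos), im_smul_eq_div_normSq, hg', abs_one, one_mul,
      ← poincareForm_num_div_denom_mul_normSq hg hθ τ.im_ne_zero]
    field_simp [normSq_denom_ne_zero g τ.im_ne_zero]
  rw [hyperbolicDensity_poincareDensity, hyperbolicDensity_poincareDensity, hdet, neg_div,
    neg_div, hexponent]

theorem fDiv_poincare_invariant (g : Matrix (Fin 2) (Fin 2) ℝ) (hg : g.det = 1)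
    (f : ℝ → ℝ)
    (θ θ' : Matrix (Fin 2) (Fin 2) ℝ) (hθ : θ.PosDef) (hθ' : θ'.PosDef) :
    fDivH f (poincareDensity θ) (poincareDensity θ') =
      fDivH f (poincareDensity ((g⁻¹)ᵀ * θ * g⁻¹)) (poincareDensity ((g⁻¹)ᵀ * θ' * g⁻¹)) := by
  obtain ⟨γ, rfl⟩ : ∃ γ : GL (Fin 2) ℝ, (γ : M₂) = g :=
    ⟨GeneralLinearGroup.mkOfDetNeZero g (by simp [hg]), rfl⟩
  rw [fDivH_eq_integral_hyperbolicDensity, fDivH_eq_integral_hyperbolicDensity]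
  conv_rhs => rw [← integral_smul_eq_self (μ := volume) _ (g := γ)]
  simp only [hyperbolicDensity_poincareDensity_smul hg (isHermitian_iff_isSymm.mp hθ.isHermitian),
    hyperbolicDensity_poincareDensity_smul hg (isHermitian_iff_isSymm.mp hθ'.isHermitian)]
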